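/- Let X1,...,Xn be i.i.d. random variables drawn from a non-atomic continuous distribution on [0,1] with n ≥ 2. Then for any distinct indices i, i', the conditional expectation E[Xi | Xi is the unique minimum among X1,...,Xn] is strictly less than E[Xi | Xi' is the unique minimum among X1,...,Xn]. -/

import Mathlib

/-!
Swapping the coordinates `i` and `i'` preserves the i.i.d. law of `(X₁, …, Xₙ)` and exchanges the
events "`Xᵢ` is the unique minimum" and "`Xᵢ'` is the unique minimum". Hence these events are
equally likely, so they have positive probability (ties are null by non-atomicity, and the `n`
events cover the rest), and `E[Xᵢ | Xᵢ' is the minimum] = E[Xᵢ' | Xᵢ is the minimum]`. The latter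
exceeds `E[Xᵢ | Xᵢ is the minimum]` because `Xᵢ < Xᵢ'` on that event.
-/

open MeasureTheory ProbabilityTheory

section ConditionalIntegrals

variable {Ω : Type*} [MeasurableSpace Ω] {μ : Measure Ω}

theorem MeasureTheory.integral_lt_integral_of_ae_lt [NeZero μ] {f g : Ω → ℝ}
    (hf : Integrable f μ) (hg : Integrable g μ) (hlt : ∀ᵐ ω ∂μ, f ω < g ω) :
    ∫ ω, f ω ∂μ < ∫ ω, g ω ∂μ := by
  rw [← sub_pos, ← integral_sub hg hf,
    integral_pos_iff_support_of_nonneg_ae (hlt.mono fun ω h => sub_nonneg.2 h.le) (hg.sub hf)]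
  have hfull : μ (Function.support fun ω => g ω - f ω)ᶜ = 0 :=
    measure_eq_zero_iff_ae_notMem.2 <| hlt.mono fun ω h hω =>
      hω (Function.mem_support.2 (sub_pos.2 h).ne')
  refine pos_iff_ne_zero.2 fun hnull => NeZero.ne μ ?_
  rw [← Measure.measure_univ_eq_zero,
    ← Set.union_compl_self (Function.support fun ω => g ω - f ω)]
  exact measure_union_null hnull hfull

theorem MeasureTheory.Integrable.cond {f : Ω → ℝ} (hf : Integrable f μ) {s : Set Ω}
    (hs : μ s ≠ 0) : Integrable f μ[|s] :=
  hf.restrict.smul_measure (ENNReal.inv_ne_top.2 hs)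

theorem ProbabilityTheory.map_cond_preimage {β : Type*} [MeasurableSpace β] {T : Ω → β}
    (hT : Measurable T) {s : Set β} (hs : MeasurableSet s) :
    (μ[|T ⁻¹' s]).map T = (μ.map T)[|s] := by
  rw [cond, cond, Measure.map_smul, ← Measure.restrict_map hT hs, Measure.map_apply hT hs]

theorem ProbabilityTheory.integral_cond_preimage {β : Type*} [MeasurableSpace β] {T : Ω → β}
    (hT : Measurable T) {s : Set β} (hs : MeasurableSet s) {f : β → ℝ} (hf : Measurable f) :
    ∫ ω, f (T ω) ∂μ[|T ⁻¹' s] = ∫ y, f y ∂(μ.map T)[|s] := by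
  rw [← map_cond_preimage hT hs, integral_map hT.aemeasurable hf.aestronglyMeasurable]

theorem ProbabilityTheory.IndepFun.measure_setOf_eq_eq_zero [IsFiniteMeasure μ] {β : Type*}
    [MeasurableSpace β] [MeasurableEq β] {X Y : Ω → β} (hX : Measurable X) (hY : Measurable Y)
    (hXY : IndepFun X Y μ) [NullSingletonClass (μ.map Y)] : μ {ω | X ω = Y ω} = 0 := by
  have hfiber (a : β) : Prod.mk a ⁻¹' Set.diagonal β = {a} := by
    ext b
    simp [eq_comm]
  rw [show {ω | X ω = Y ω} = (fun ω => (X ω, Y ω)) ⁻¹' Set.diagonal β from rfl,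
    ← Measure.map_apply (hX.prodMk hY) measurableSet_diagonal,
    (indepFun_iff_map_prod_eq_prod_map_map hX.aemeasurable hY.aemeasurable).1 hXY,
    Measure.prod_apply measurableSet_diagonal]
  simp [hfiber]

end ConditionalIntegrals

section Exchangeable

variable {ι α : Type*} [MeasurableSpace α]

def Exchangeable (ν : Measure (ι → α)) : Prop :=
  ∀ e : Equiv.Perm ι, MeasurePreserving (fun x : ι → α => x ∘ e) ν ν

theorem exchangeable_pi [Fintype ι] (D : Measure α) [SigmaFinite D] :
    Exchangeable (Measure.pi fun _ : ι => D) := fun e => by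
  convert measurePreserving_arrowCongr' (fun _ => D) (fun _ => D) e.symm
    (MeasurableEquiv.refl α) fun _ => MeasurePreserving.id D
  rfl

theorem ae_injective_pi [Fintype ι] [MeasurableEq α] (D : Measure α) [IsProbabilityMeasure D]
    [NullSingletonClass D] : ∀ᵐ x ∂(Measure.pi fun _ : ι => D), Function.Injective x := by
  have hcoord : iIndepFun (fun j (x : ι → α) => x j) (Measure.pi fun _ : ι => D) :=
    iIndepFun_pi (X := fun _ => id) fun _ => aemeasurable_id
  have hne (j k : ι) : ∀ᵐ x ∂(Measure.pi fun _ : ι => D), j ≠ k → x j ≠ x k := by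
    by_cases hjk : j = k
    · simp [hjk]
    have : NullSingletonClass ((Measure.pi fun _ : ι => D).map fun x => x k) := by
      rw [(measurePreserving_eval (fun _ => D) k).map_eq]
      infer_instance
    have hties := (hcoord.indepFun hjk).measure_setOf_eq_eq_zero
      (measurable_pi_apply j) (measurable_pi_apply k)
    filter_upwards [measure_eq_zero_iff_ae_notMem.1 hties] with x hx _ using hx
  filter_upwards [ae_all_iff.2 fun j => ae_all_iff.2 (hne j)] with x hx j k hjk
  by_contra h
  exact hx j k h hjk

end Exchangeable

section UniqueMin

variable {ι : Type*}

def uniqueMinSet (k : ι) : Set (ι → ℝ) := {x | ∀ j, j ≠ k → x k < x j}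

theorem measurableSet_uniqueMinSet [Countable ι] (k : ι) : MeasurableSet (uniqueMinSet k) := by
  simp only [uniqueMinSet, Set.ofPred_forall]
  exact MeasurableSet.iInter fun j => MeasurableSet.iInter fun _ =>
    measurableSet_lt (measurable_pi_apply k) (measurable_pi_apply j)

theorem preimage_comp_perm_uniqueMinSet (e : Equiv.Perm ι) (k : ι) :
    (fun x : ι → ℝ => x ∘ e) ⁻¹' uniqueMinSet k = uniqueMinSet (e k) := by
  ext x
  simp only [uniqueMinSet, Set.mem_preimage, Set.mem_ofPred_eq, Function.comp_apply]
  rw [e.forall_congr_left]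
  simp [Equiv.symm_apply_eq]

theorem exists_mem_uniqueMinSet_of_injective [Finite ι] [Nonempty ι] {x : ι → ℝ}
    (hx : Function.Injective x) : ∃ k, x ∈ uniqueMinSet k := by
  obtain ⟨k, hk⟩ := Finite.exists_min x
  exact ⟨k, fun j hj => (hk j).lt_of_ne fun h => hj (hx h).symm⟩

theorem Exchangeable.measure_uniqueMinSet_eq [Countable ι] [DecidableEq ι] {ν : Measure (ι → ℝ)}
    (hν : Exchangeable ν) (k k' : ι) : ν (uniqueMinSet k) = ν (uniqueMinSet k') := by
  have := (hν (Equiv.swap k k')).measure_preimage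
    (measurableSet_uniqueMinSet k').nullMeasurableSet
  rwa [preimage_comp_perm_uniqueMinSet, Equiv.swap_apply_right] at this

theorem Exchangeable.measure_uniqueMinSet_ne_zero [Finite ι] [DecidableEq ι]
    {ν : Measure (ι → ℝ)} [NeZero ν] (hν : Exchangeable ν) (hinj : ∀ᵐ x ∂ν, Function.Injective x)
    (i : ι) : ν (uniqueMinSet i) ≠ 0 := by
  have : Nonempty ι := ⟨i⟩
  intro hi
  have hnull : ν (⋃ k, uniqueMinSet k) = 0 :=
    measure_iUnion_null fun k => (hν.measure_uniqueMinSet_eq k i).trans hi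
  obtain ⟨x, hx, hxinj⟩ := ((measure_eq_zero_iff_ae_notMem.1 hnull).and hinj).exists
  obtain ⟨k, hk⟩ := exists_mem_uniqueMinSet_of_injective hxinj
  exact hx (Set.mem_iUnion.2 ⟨k, hk⟩)

theorem integral_cond_uniqueMinSet_lt [Countable ι] [DecidableEq ι] {ν : Measure (ι → ℝ)}
    [IsFiniteMeasure ν] {i i' : ι} (hii' : i ≠ i')
    (hswap : MeasurePreserving (fun x : ι → ℝ => x ∘ Equiv.swap i i') ν ν)
    (hpos : ν (uniqueMinSet i) ≠ 0) (hint : ∀ j, Integrable (fun x : ι → ℝ => x j) ν) :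
    ∫ x, x i ∂ν[|uniqueMinSet i] < ∫ x, x i ∂ν[|uniqueMinSet i'] := by
  have : IsProbabilityMeasure ν[|uniqueMinSet i] := cond_isProbabilityMeasure hpos
  have hreflect : ∫ x, x i ∂ν[|uniqueMinSet i'] = ∫ x, x i' ∂ν[|uniqueMinSet i] := by
    have := integral_cond_preimage (μ := ν) hswap.measurable (measurableSet_uniqueMinSet i')
      (measurable_pi_apply i)
    rw [hswap.map_eq, preimage_comp_perm_uniqueMinSet, Equiv.swap_apply_right] at this
    simpa using this.symm
  rw [hreflect]
  exact integral_lt_integral_of_ae_lt ((hint i).cond hpos) ((hint i').cond hpos)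
    ((ae_cond_mem (measurableSet_uniqueMinSet i)).mono fun x hx => hx i' hii'.symm)

end UniqueMin

theorem disutility_gap_general
    {Ω : Type*} [MeasurableSpace Ω] (μ : Measure Ω) [IsProbabilityMeasure μ]
    (n : ℕ) (X : Fin n → Ω → ℝ) (D : Measure ℝ) [IsProbabilityMeasure D]
    (hmeas : ∀ i, Measurable (X i))
    (hindep : iIndepFun X μ)
    (hdist : ∀ i, Measure.map (X i) μ = D)
    (hsupp : D (Set.Icc (0 : ℝ) 1) = 1)
    (hnonatomic : ∀ x : ℝ, D {x} = 0)
    (i i' : Fin n) (hii' : i ≠ i') :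
    (∫ ω, X i ω ∂(μ[|{ω | ∀ j, j ≠ i → X i ω < X j ω}])) <
      (∫ ω, X i ω ∂(μ[|{ω | ∀ j, j ≠ i' → X i' ω < X j ω}])) := by
  have : NullSingletonClass D := ⟨hnonatomic⟩
  have hlaw : μ.map (fun ω j => X j ω) = Measure.pi fun _ => D := by
    rw [hindep.map_fun_eq_pi_map fun j => (hmeas j).aemeasurable]
    simp only [hdist]
  have hcond (k : Fin n) : ∫ ω, X i ω ∂μ[|{ω | ∀ j, j ≠ k → X k ω < X j ω}] =
      ∫ x, x i ∂(Measure.pi fun _ => D)[|uniqueMinSet k] := by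
    rw [← hlaw]
    exact integral_cond_preimage (measurable_pi_lambda _ hmeas) (measurableSet_uniqueMinSet k)
      (measurable_pi_apply i)
  have hDint : Integrable id D :=
    Integrable.of_mem_Icc 0 1 aemeasurable_id ((mem_ae_iff_prob_eq_one measurableSet_Icc).2 hsupp)
  have hexch := exchangeable_pi (ι := Fin n) D
  rw [hcond i, hcond i']
  exact integral_cond_uniqueMinSet_lt hii' (hexch _)
    (hexch.measure_uniqueMinSet_ne_zero (ae_injective_pi D) i) fun j =>
      ((measurePreserving_eval _ j).integrable_comp aemeasurable_id.aestronglyMeasurable).2 hDint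

/-- Lemma "Disutility-Gap": for i.i.d. draws from a non-atomic distribution on `[0,1]`,
the conditional expectation of `X i` given that `X i` is the unique minimum is strictly
smaller than its conditional expectation given that `X i'` is the unique minimum. -/
theorem disutility_gap
    {Ω : Type*} [MeasurableSpace Ω] (μ : Measure Ω) [IsProbabilityMeasure μ]
    (n : ℕ) (hn : 2 ≤ n) (X : Fin n → Ω → ℝ) (D : Measure ℝ) [IsProbabilityMeasure D]
    (hmeas : ∀ i, Measurable (X i))
    (hindep : iIndepFun X μ)
    (hdist : ∀ i, Measure.map (X i) μ = D)
    (hsupp : D (Set.Icc (0 : ℝ) 1) = 1)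
    (hnonatomic : ∀ x : ℝ, D {x} = 0)
    (i i' : Fin n) (hii' : i ≠ i') :
    (∫ ω, X i ω ∂(μ[|{ω | ∀ j, j ≠ i → X i ω < X j ω}])) <
      (∫ ω, X i ω ∂(μ[|{ω | ∀ j, j ≠ i' → X i' ω < X j ω}])) :=
  disutility_gap_general μ n X D hmeas hindep hdist hsupp hnonatomic i i' hii'
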